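/- arXiv:2310.02899 — 6 statements merged into one kernel-verified Lean document; each statement's English description precedes it below -/
import Mathlib

section
/- For μ > 0 and |β| < μ, the double integral ∫_{(M,N): N>0, |M|<N} e^{-βM - μN} Z_n(M,N) dM dN equals (1/(μ+β) + 1/(μ-β))^n - (1/(μ+β))^n - (1/(μ-β))^n. -/
/-!
In lightcone coordinates `u = (N + M) / 2`, `v = (N - M) / 2` the cone becomes the open
quadrant, the Jacobian is `2`, and the weight factorises as
`exp (-(μ + β) u) * exp (-(μ - β) v)`.
Each term of `Z_n` then integrates to a product of two Gamma integrals
`∫ t ^ m / m! * exp (-r t) dt = (1 / r) ^ (m + 1)`, and the binomial theorem sums these products;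
the terms `k = 0` and `k = n` are absent from `Z_n`.
-/

open scoped Nat
open MeasureTheory

/-- The microcanonical partition function `Z_n(M,N)` of the orthoplicial model. -/
noncomputable def Zorth (n : ℕ) (M N : ℝ) : ℝ :=
  (1/2) * ∑ k ∈ Finset.Ico 1 n,
    (n.choose k : ℝ) * (((N + M)/2) ^ (k - 1) / ((k - 1)! : ℝ)) *
      (((N - M)/2) ^ (n - k - 1) / ((n - k - 1)! : ℝ))

open Set Real

lemma integrableOn_pow_div_factorial_mul_exp_neg_mul_Ioi (m : ℕ) {r : ℝ} (hr : 0 < r) :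
    IntegrableOn (fun t : ℝ => t ^ m / m ! * exp (-(r * t))) (Ioi 0) := by
  refine IntegrableOn.congr_fun (Integrable.div_const (integrableOn_rpow_mul_exp_neg_mul_rpow
    (s := m) (p := 1) (neg_one_lt_zero.trans_le m.cast_nonneg) one_pos hr) (m ! : ℝ))
    (fun t _ => ?_) measurableSet_Ioi
  simp only [rpow_natCast, rpow_one, neg_mul]
  ring

lemma integral_pow_div_factorial_mul_exp_neg_mul_Ioi (m : ℕ) {r : ℝ} (hr : 0 < r) :
    ∫ t in Ioi 0, t ^ m / m ! * exp (-(r * t)) = (1 / r) ^ (m + 1) := by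
  have h := integral_rpow_mul_exp_neg_mul_Ioi (a := m + 1) (by positivity) hr
  rw [add_sub_cancel_right, Gamma_nat_eq_factorial, ← Nat.cast_succ, rpow_natCast] at h
  simp_rw [rpow_natCast] at h
  simp_rw [div_mul_eq_mul_div, integral_div, h]
  field_simp

lemma sum_Ico_choose_mul_pow {R : Type*} [CommRing R] {n : ℕ} (hn : 1 ≤ n) (a b : R) :
    ∑ k ∈ Finset.Ico 1 n, n.choose k * (a ^ k * b ^ (n - k)) = (a + b) ^ n - a ^ n - b ^ n := by
  rw [add_pow, Finset.sum_range_succ, Finset.sum_range_eq_add_Ico _ hn]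
  simp only [pow_zero, Nat.sub_zero, Nat.choose_zero_right, Nat.sub_self, Nat.choose_self,
    Nat.cast_one, one_mul, mul_one, mul_comm (n.choose _ : R)]
  ring

/-- `(u, v) ↦ (M, N)`, the inverse of the lightcone coordinates. -/
def ofLightcone : ℝ × ℝ →L[ℝ] ℝ × ℝ :=
  (ContinuousLinearMap.fst ℝ ℝ ℝ - ContinuousLinearMap.snd ℝ ℝ ℝ).prod
    (ContinuousLinearMap.fst ℝ ℝ ℝ + ContinuousLinearMap.snd ℝ ℝ ℝ)

@[simp]
lemma ofLightcone_apply (x : ℝ × ℝ) : ofLightcone x = (x.1 - x.2, x.1 + x.2) := rfl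

lemma ofLightcone_injective : Function.Injective ofLightcone := by
  rintro ⟨u, v⟩ ⟨u', v'⟩ h
  simp only [ofLightcone_apply, Prod.mk.injEq] at h
  obtain ⟨h₁, h₂⟩ := h
  ext <;> linarith

lemma det_ofLightcone : ofLightcone.det = 2 := by
  have hmat : LinearMap.toMatrix (Module.Basis.finTwoProd ℝ) (Module.Basis.finTwoProd ℝ)
      (ofLightcone : ℝ × ℝ →ₗ[ℝ] ℝ × ℝ) = !![1, -1; 1, 1] := by
    ext i j
    fin_cases i <;> fin_cases j <;> simp [LinearMap.toMatrix_apply]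
  rw [ContinuousLinearMap.det, ← LinearMap.det_toMatrix (Module.Basis.finTwoProd ℝ), hmat,
    Matrix.det_fin_two_of]
  norm_num

lemma ofLightcone_image_Ioi_prod_Ioi :
    ofLightcone '' (Ioi (0 : ℝ) ×ˢ Ioi (0 : ℝ)) =
      {p : ℝ × ℝ | 0 < p.2 ∧ |p.1| < p.2} := by
  ext ⟨M, N⟩
  simp only [mem_image, mem_prod, mem_Ioi, Prod.exists, ofLightcone_apply, Prod.mk.injEq,
    mem_ofPred_eq, abs_lt]
  constructor
  · rintro ⟨u, v, ⟨hu, hv⟩, rfl, rfl⟩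
    refine ⟨?_, ?_, ?_⟩ <;> linarith
  · rintro ⟨hN, hM₁, hM₂⟩
    exact ⟨(N + M) / 2, (N - M) / 2, ⟨by linarith, by linarith⟩, by ring, by ring⟩

lemma setIntegral_cone_eq {E : Type*} [NormedAddCommGroup E] [NormedSpace ℝ E]
    (f : ℝ × ℝ → E) :
    ∫ p in {p : ℝ × ℝ | 0 < p.2 ∧ |p.1| < p.2}, f p =
      (2 : ℝ) • ∫ x in Ioi (0 : ℝ) ×ˢ Ioi (0 : ℝ), f (x.1 - x.2, x.1 + x.2) := by
  rw [← ofLightcone_image_Ioi_prod_Ioi, integral_image_eq_integral_abs_det_fderiv_smul volume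
    (measurableSet_Ioi.prod measurableSet_Ioi)
    (fun x _ => ofLightcone.hasFDerivAt.hasFDerivWithinAt) ofLightcone_injective.injOn,
    det_ofLightcone, abs_two, integral_smul]
  rfl

lemma integrableOn_Ioi_prod_Ioi_mul (j l : ℕ) {a b : ℝ} (ha : 0 < a) (hb : 0 < b) :
    IntegrableOn (fun x : ℝ × ℝ => (x.1 ^ j / j ! * exp (-(a * x.1))) *
      (x.2 ^ l / l ! * exp (-(b * x.2)))) (Ioi (0 : ℝ) ×ˢ Ioi (0 : ℝ)) := by
  rw [IntegrableOn, Measure.volume_eq_prod, ← Measure.prod_restrict]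
  exact (integrableOn_pow_div_factorial_mul_exp_neg_mul_Ioi j ha).mul_prod
    (integrableOn_pow_div_factorial_mul_exp_neg_mul_Ioi l hb)

lemma integral_Ioi_prod_Ioi_mul (j l : ℕ) {a b : ℝ} (ha : 0 < a) (hb : 0 < b) :
    ∫ x in Ioi (0 : ℝ) ×ˢ Ioi (0 : ℝ), (x.1 ^ j / j ! * exp (-(a * x.1))) *
      (x.2 ^ l / l ! * exp (-(b * x.2))) = (1 / a) ^ (j + 1) * (1 / b) ^ (l + 1) := by
  rw [Measure.volume_eq_prod, setIntegral_prod_mul (fun t => t ^ j / j ! * exp (-(a * t)))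
    (fun t => t ^ l / l ! * exp (-(b * t))), integral_pow_div_factorial_mul_exp_neg_mul_Ioi j ha,
    integral_pow_div_factorial_mul_exp_neg_mul_Ioi l hb]

lemma exp_mul_Zorth_ofLightcone (n : ℕ) (β μ u v : ℝ) :
    exp (-β * (u - v) - μ * (u + v)) * Zorth n (u - v) (u + v) =
      1 / 2 * ∑ k ∈ Finset.Ico 1 n, n.choose k *
        ((u ^ (k - 1) / (k - 1)! * exp (-((μ + β) * u))) *
          (v ^ (n - k - 1) / (n - k - 1)! * exp (-((μ - β) * v)))) := by
  have hu : (u + v + (u - v)) / 2 = u := by ring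
  have hv : (u + v - (u - v)) / 2 = v := by ring
  have hexp : exp (-β * (u - v) - μ * (u + v)) =
      exp (-((μ + β) * u)) * exp (-((μ - β) * v)) := by
    rw [← exp_add]; ring_nf
  rw [Zorth, hu, hv, hexp, Finset.mul_sum, Finset.mul_sum, Finset.mul_sum]
  refine Finset.sum_congr rfl fun k _ => ?_
  ring

theorem laplace_Zorth_general (n : ℕ) (hn : 2 ≤ n) (β μ : ℝ) (hβ : |β| < μ) :
    ∫ p in {p : ℝ × ℝ | 0 < p.2 ∧ |p.1| < p.2},
        Real.exp (-β * p.1 - μ * p.2) * Zorth n p.1 p.2 =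
      (1/(μ + β) + 1/(μ - β)) ^ n - (1/(μ + β)) ^ n - (1/(μ - β)) ^ n := by
  obtain ⟨hβ₁, hβ₂⟩ := abs_lt.mp hβ
  have ha : 0 < μ + β := by linarith
  have hb : 0 < μ - β := by linarith
  rw [setIntegral_cone_eq, ← sum_Ico_choose_mul_pow (by omega : 1 ≤ n)]
  simp only [exp_mul_Zorth_ofLightcone]
  rw [integral_const_mul, integral_finsetSum _ fun k _ =>
    (integrableOn_Ioi_prod_Ioi_mul _ _ ha hb).const_mul _, smul_eq_mul, ← mul_assoc,
    mul_one_div_cancel two_ne_zero, one_mul]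
  refine Finset.sum_congr rfl fun k hk => ?_
  obtain ⟨hk₁, hk₂⟩ := Finset.mem_Ico.mp hk
  rw [integral_const_mul, integral_Ioi_prod_Ioi_mul _ _ ha hb, Nat.sub_add_cancel hk₁,
    show n - k - 1 + 1 = n - k by omega]

/-- The Laplace transform of the microcanonical partition function over the cone
`A = {(M,N) : N > 0, |M| < N}` gives the grand canonical partition function. -/
theorem laplace_Zorth (n : ℕ) (hn : 2 ≤ n) (β μ : ℝ) (hμ : 0 < μ) (hβ : |β| < μ) :
    ∫ p in {p : ℝ × ℝ | 0 < p.2 ∧ |p.1| < p.2},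
        Real.exp (-β * p.1 - μ * p.2) * Zorth n p.1 p.2 =
      (1/(μ + β) + 1/(μ - β)) ^ n - (1/(μ + β)) ^ n - (1/(μ - β)) ^ n :=
  laplace_Zorth_general n hn β μ hβ
end

section
/- The function f(β,μ) = log(1/(μ+β) + 1/(μ-β)), defined on the open cone A = {(β,μ) : μ > 0, |β| < μ}, is strictly convex on A. -/
/-!
In the light-cone coordinates `v = μ + β`, `w = μ - β`, which map the cone `A` linearly onto the
open positive quadrant, the function becomes
`g v w = log (1/v + 1/w) = log (v + w) - log v - log w`.
Along a line with velocity `(v', w')` its second derivative is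
`(v'/v)² + (w'/w)² - ((v' + w')/(v + w))²`, which is positive: `(v' + w')/(v + w)` is the convex
combination of `v'/v` and `w'/w` with weights `v/(v + w)` and `w/(v + w)`, both less than `1`.
-/

open Real Set

section Convexity

variable {𝕜 E F β : Type*}

theorem StrictConvexOn.comp_linearMap [Semiring 𝕜] [PartialOrder 𝕜] [AddCommMonoid E]
    [AddCommMonoid F] [Module 𝕜 E] [Module 𝕜 F] [AddCommMonoid β] [PartialOrder β] [SMul 𝕜 β]
    {f : F → β} {s : Set F} (hf : StrictConvexOn 𝕜 s f) (g : E →ₗ[𝕜] F)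
    (hg : Function.Injective g) : StrictConvexOn 𝕜 (g ⁻¹' s) (f ∘ g) :=
  ⟨hf.1.linear_preimage _, fun x hx y hy hxy a b ha hb hab =>
    calc
      f (g (a • x + b • y)) = f (a • g x + b • g y) := by rw [g.map_add, g.map_smul, g.map_smul]
      _ < a • f (g x) + b • f (g y) := hf.2 hx hy (hg.ne hxy) ha hb hab⟩

theorem strictConvexOn_of_forall_lineMap [Field 𝕜] [LinearOrder 𝕜] [IsStrictOrderedRing 𝕜]
    [AddCommGroup E] [Module 𝕜 E] [AddCommMonoid β] [PartialOrder β] [SMul 𝕜 β]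
    {s : Set E} {f : E → β} (hs : Convex 𝕜 s)
    (h : ∀ x ∈ s, ∀ y ∈ s, x ≠ y → StrictConvexOn 𝕜 (Icc (0 : 𝕜) 1) (f ∘ AffineMap.lineMap x y)) :
    StrictConvexOn 𝕜 s f := by
  refine ⟨hs, fun x hx y hy hxy a b ha hb hab => ?_⟩
  have h01 := (h x hx y hy hxy).2 (left_mem_Icc.2 zero_le_one) (right_mem_Icc.2 zero_le_one)
    zero_ne_one ha hb hab
  obtain rfl : a = 1 - b := eq_sub_of_add_eq hab
  simpa [AffineMap.lineMap_apply_module] using h01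

end Convexity

theorem strictConvexOn_of_hasDerivWithinAt2_pos {D : Set ℝ} (hD : Convex ℝ D) {f f' f'' : ℝ → ℝ}
    (hf : ContinuousOn f D) (hf' : ∀ x ∈ interior D, HasDerivWithinAt f (f' x) (interior D) x)
    (hf'' : ∀ x ∈ interior D, HasDerivWithinAt f' (f'' x) (interior D) x)
    (hf''₀ : ∀ x ∈ interior D, 0 < f'' x) : StrictConvexOn ℝ D f := by
  have hderiv : (interior D).EqOn (deriv f) f' := deriv_eqOn isOpen_interior hf'
  have hmono : StrictMonoOn f' (interior D) :=
    strictMonoOn_of_hasDerivWithinAt_pos hD.interior (fun x hx => (hf'' x hx).continuousWithinAt)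
      (by rwa [interior_interior]) (by rwa [interior_interior])
  refine StrictMonoOn.strictConvexOn_of_deriv hD hf fun x hx y hy hxy => ?_
  rw [hderiv hx, hderiv hy]
  exact hmono hx hy hxy

theorem sq_add_div_add_lt_sq_div_add_sq_div {a b v w : ℝ} (hv : 0 < v) (hw : 0 < w)
    (hab : a ≠ 0 ∨ b ≠ 0) :
    ((a + b) / (v + w)) ^ 2 < (a / v) ^ 2 + (b / w) ^ 2 := by
  obtain ⟨p, rfl⟩ : ∃ p, a = v * p := ⟨a / v, by field_simp⟩
  obtain ⟨q, rfl⟩ : ∃ q, b = w * q := ⟨b / w, by field_simp⟩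
  have hpq : 0 < p ^ 2 + q ^ 2 := by
    rcases hab with h | h
    · have := right_ne_zero_of_mul h
      positivity
    · have := right_ne_zero_of_mul h
      positivity
  rw [mul_div_cancel_left₀ _ hv.ne', mul_div_cancel_left₀ _ hw.ne', div_pow,
    div_lt_iff₀ (by positivity)]
  nlinarith [mul_pos hv hw, sq_nonneg (p - q), sq_nonneg (w * p), sq_nonneg (v * q),
    mul_pos (mul_pos hv hw) hpq]

theorem log_one_div_add_one_div {v w : ℝ} (hv : 0 < v) (hw : 0 < w) :
    log (1 / v + 1 / w) = log (v + w) - log v - log w := by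
  rw [one_div_add_one_div hv.ne' hw.ne', log_div (by positivity) (by positivity),
    log_mul hv.ne' hw.ne', sub_sub]

theorem HasDerivAt.const_div_self {u : ℝ → ℝ} {c t : ℝ} (hu : HasDerivAt u c t)
    (ht : u t ≠ 0) : HasDerivAt (fun s => c / u s) (-(c / u t) ^ 2) t :=
  ((hasDerivAt_const t c).div hu ht).congr_deriv (by field_simp; ring)

theorem strictConvexOn_log_one_div_add_one_div_of_hasDerivAt {D : Set ℝ} (hD : Convex ℝ D)
    {v w : ℝ → ℝ} {v' w' : ℝ} (hv' : ∀ t, HasDerivAt v v' t) (hw' : ∀ t, HasDerivAt w w' t)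
    (hv : ∀ t ∈ D, 0 < v t) (hw : ∀ t ∈ D, 0 < w t) (hvw' : v' ≠ 0 ∨ w' ≠ 0) :
    StrictConvexOn ℝ D (fun t => log (1 / v t + 1 / w t)) := by
  have hvw : ∀ t ∈ D, 0 < v t + w t := fun t ht => add_pos (hv t ht) (hw t ht)
  have hlog : ∀ t ∈ D, HasDerivAt (fun s => log (v s + w s) - log (v s) - log (w s))
      ((v' + w') / (v t + w t) - v' / v t - w' / w t) t := fun t ht =>
    ((((hv' t).fun_add (hw' t)).log (hvw t ht).ne').sub ((hv' t).log (hv t ht).ne')).sub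
      ((hw' t).log (hw t ht).ne')
  have hlog' : ∀ t ∈ D, HasDerivAt (fun s => (v' + w') / (v s + w s) - v' / v s - w' / w s)
      ((v' / v t) ^ 2 + (w' / w t) ^ 2 - ((v' + w') / (v t + w t)) ^ 2) t := fun t ht =>
    ((((hv' t).fun_add (hw' t)).const_div_self (hvw t ht).ne').sub
      ((hv' t).const_div_self (hv t ht).ne')).sub
      ((hw' t).const_div_self (hw t ht).ne') |>.congr_deriv (by ring)
  refine (strictConvexOn_of_hasDerivWithinAt2_pos hD
    (fun t ht => (hlog t ht).continuousAt.continuousWithinAt)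
    (fun t ht => (hlog t (interior_subset ht)).hasDerivWithinAt)
    (fun t ht => (hlog' t (interior_subset ht)).hasDerivWithinAt)
    (fun t ht => sub_pos.2 <| sq_add_div_add_lt_sq_div_add_sq_div (hv t (interior_subset ht))
      (hw t (interior_subset ht)) hvw')).congr
    fun t ht => (log_one_div_add_one_div (hv t ht) (hw t ht)).symm

theorem strictConvexOn_log_one_div_add_one_div :
    StrictConvexOn ℝ (Ioi (0 : ℝ) ×ˢ Ioi (0 : ℝ)) (fun p : ℝ × ℝ => log (1 / p.1 + 1 / p.2)) := by
  have hs : Convex ℝ (Ioi (0 : ℝ) ×ˢ Ioi (0 : ℝ)) := (convex_Ioi 0).prod (convex_Ioi 0)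
  refine strictConvexOn_of_forall_lineMap hs fun p hp q hq hpq => ?_
  have hmem : ∀ t ∈ Icc (0 : ℝ) 1, AffineMap.lineMap p q t ∈ Ioi (0 : ℝ) ×ˢ Ioi (0 : ℝ) :=
    fun t ht => hs.lineMap_mem hp hq ht
  refine strictConvexOn_log_one_div_add_one_div_of_hasDerivAt (convex_Icc 0 1)
    (fun t => by simpa only [AffineMap.fst_lineMap] using AffineMap.hasDerivAt_lineMap)
    (fun t => by simpa only [AffineMap.snd_lineMap] using AffineMap.hasDerivAt_lineMap)
    (fun t ht => (hmem t ht).1) (fun t ht => (hmem t ht).2) ?_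
  by_contra! h
  exact hpq (Prod.ext (sub_eq_zero.1 h.1).symm (sub_eq_zero.1 h.2).symm)

def lightConeCoords : ℝ × ℝ →ₗ[ℝ] ℝ × ℝ :=
  (LinearMap.snd ℝ ℝ ℝ + LinearMap.fst ℝ ℝ ℝ).prod (LinearMap.snd ℝ ℝ ℝ - LinearMap.fst ℝ ℝ ℝ)

@[simp]
theorem lightConeCoords_apply (p : ℝ × ℝ) : lightConeCoords p = (p.2 + p.1, p.2 - p.1) := rfl

theorem lightConeCoords_injective : Function.Injective lightConeCoords := by
  intro p q h
  simp only [lightConeCoords_apply, Prod.mk.injEq] at h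
  exact Prod.ext (by linarith) (by linarith)

theorem lightConeCoords_preimage_Ioi_prod_Ioi :
    lightConeCoords ⁻¹' (Ioi (0 : ℝ) ×ˢ Ioi (0 : ℝ)) = {p : ℝ × ℝ | 0 < p.2 ∧ |p.1| < p.2} := by
  ext p
  simp only [mem_preimage, lightConeCoords_apply, mem_prod, mem_Ioi, mem_ofPred_eq, abs_lt]
  constructor
  · rintro ⟨h₁, h₂⟩
    exact ⟨by linarith, by linarith, by linarith⟩
  · rintro ⟨-, h₁, h₂⟩
    exact ⟨by linarith, by linarith⟩

/-- The grand canonical entropy `f(β,μ) = log(1/(μ+β) + 1/(μ-β))` is strictly convex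
on the open cone `A = {(β,μ) : μ > 0, |β| < μ}`. -/
theorem grand_canonical_entropy_strictConvexOn :
    StrictConvexOn ℝ {p : ℝ × ℝ | 0 < p.2 ∧ |p.1| < p.2}
      (fun p : ℝ × ℝ => Real.log (1/(p.2 + p.1) + 1/(p.2 - p.1))) := by
  rw [← lightConeCoords_preimage_Ioi_prod_Ioi]
  exact strictConvexOn_log_one_div_add_one_div.comp_linearMap lightConeCoords
    lightConeCoords_injective
end

section
/- For (m,ρ) in A = {(m,ρ): ρ>0, |m|<ρ}, the infimum over (β,μ) ∈ A of βm + μρ + log(1/(μ+β) + 1/(μ-β)) equals 1 + log((√((ρ+m)/2) + √((ρ-m)/2))²). -/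
/-!
In the coordinates `u = μ + β`, `v = μ - β` the objective becomes
`u p + v q + log (1/u + 1/v)` with `p = (ρ + m)/2`, `q = (ρ - m)/2`, and the positive quadrant
replaces the cone. Cauchy–Schwarz gives `(√p + √q)² ≤ (u p + v q)(1/u + 1/v)`, and the tangent
line bound `log x ≤ x - 1` at `x = (√p + √q)² / (1/u + 1/v)` turns this into the lower bound
`1 + log ((√p + √q)²)`. Equality holds in both steps at `u = 1/(√p (√p + √q))`,
`v = 1/(√q (√p + √q))`.
-/

open Real

lemma sq_add_le_mul_inv_add_inv {a b u v : ℝ} (hu : 0 < u) (hv : 0 < v) :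
    (a + b) ^ 2 ≤ (u * a ^ 2 + v * b ^ 2) * (1 / u + 1 / v) := by
  have hmul : (u * a ^ 2 + v * b ^ 2) * (1 / u + 1 / v) =
      (u * a ^ 2 + v * b ^ 2) * (u + v) / (u * v) := by
    field_simp
    ring
  rw [hmul, le_div_iff₀ (by positivity)]
  nlinarith [sq_nonneg (u * a - v * b)]

lemma one_add_log_le_div_add_log {c t : ℝ} (hc : 0 < c) (ht : 0 < t) :
    1 + log c ≤ c / t + log t := by
  have := log_le_sub_one_of_pos (div_pos hc ht)
  rw [log_div hc.ne' ht.ne'] at this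
  linarith

lemma one_add_log_sq_sqrt_add_sqrt_le {p q u v : ℝ} (hp : 0 < p) (hq : 0 ≤ q) (hu : 0 < u)
    (hv : 0 < v) : 1 + log ((√p + √q) ^ 2) ≤ u * p + v * q + log (1 / u + 1 / v) := by
  have ht : 0 < 1 / u + 1 / v := by positivity
  calc 1 + log ((√p + √q) ^ 2)
      ≤ (√p + √q) ^ 2 / (1 / u + 1 / v) + log (1 / u + 1 / v) :=
        one_add_log_le_div_add_log (by positivity) ht
    _ ≤ u * p + v * q + log (1 / u + 1 / v) := by
        gcongr
        rw [div_le_iff₀ ht]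
        simpa only [sq_sqrt hp.le, sq_sqrt hq] using
          sq_add_le_mul_inv_add_inv (a := √p) (b := √q) hu hv

lemma exists_add_log_inv_add_inv_eq {p q : ℝ} (hp : 0 < p) (hq : 0 < q) :
    ∃ u v : ℝ, 0 < u ∧ 0 < v ∧
      u * p + v * q + log (1 / u + 1 / v) = 1 + log ((√p + √q) ^ 2) := by
  refine ⟨1 / (√p * (√p + √q)), 1 / (√q * (√p + √q)), by positivity, by positivity, ?_⟩
  have hlin : 1 / (√p * (√p + √q)) * p + 1 / (√q * (√p + √q)) * q = 1 := by
    field_simp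
    linear_combination (-√q) * mul_self_sqrt hp.le - √p * mul_self_sqrt hq.le
  rw [hlin, one_div_one_div, one_div_one_div]
  ring_nf

theorem legendre_duality_entropy_general (m ρ : ℝ) (hm : |m| < ρ) :
    sInf ((fun p : ℝ × ℝ => p.1 * m + p.2 * ρ + Real.log (1/(p.2 + p.1) + 1/(p.2 - p.1))) ''
        {p : ℝ × ℝ | 0 < p.2 ∧ |p.1| < p.2}) =
      1 + Real.log ((Real.sqrt ((ρ + m)/2) + Real.sqrt ((ρ - m)/2)) ^ 2) := by
  obtain ⟨hm₁, hm₂⟩ := abs_lt.mp hm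
  have hp : 0 < (ρ + m) / 2 := by linarith
  have hq : 0 < (ρ - m) / 2 := by linarith
  have hlin (β μ : ℝ) :
      β * m + μ * ρ = (μ + β) * ((ρ + m) / 2) + (μ - β) * ((ρ - m) / 2) := by ring
  refine IsLeast.csInf_eq ⟨?_, ?_⟩
  · obtain ⟨u, v, hu, hv, hmin⟩ := exists_add_log_inv_add_inv_eq hp hq
    refine ⟨((u - v) / 2, (u + v) / 2), ⟨by positivity, abs_lt.mpr ⟨by linarith, by linarith⟩⟩, ?_⟩
    dsimp only
    rw [hlin, ← hmin]
    ring_nf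
  · rintro _ ⟨⟨β, μ⟩, ⟨hμ, hβ⟩, rfl⟩
    obtain ⟨hβ₁, hβ₂⟩ := abs_lt.mp hβ
    dsimp only
    rw [hlin]
    exact one_add_log_sq_sqrt_add_sqrt_le hp hq.le (by linarith) (by linarith)

/-- Legendre duality for the orthoplicial model: for `(m,ρ)` in the cone
`A = {(m,ρ): ρ>0, |m|<ρ}`,
`inf_{(β,μ)∈A} [βm + μρ + log(1/(μ+β)+1/(μ-β))] = 1 + log((√((ρ+m)/2)+√((ρ-m)/2))²)`. -/
theorem legendre_duality_entropy (m ρ : ℝ) (hρ : 0 < ρ) (hm : |m| < ρ) :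
    sInf ((fun p : ℝ × ℝ => p.1 * m + p.2 * ρ + Real.log (1/(p.2 + p.1) + 1/(p.2 - p.1))) ''
        {p : ℝ × ℝ | 0 < p.2 ∧ |p.1| < p.2}) =
      1 + Real.log ((Real.sqrt ((ρ + m)/2) + Real.sqrt ((ρ - m)/2)) ^ 2) :=
  legendre_duality_entropy_general m ρ hm
end

section
/- For a,b > 0, the infimum over (g₁,g₂) ∈ (0,∞)² of a·g₁ + b·g₂ + log(1/g₁ + 1/g₂) equals 1 + log((√a + √b)²), attained at g₁ = 1/(√a(√a+√b)), g₂ = 1/(√b(√a+√b)). -/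
/-- For `a, b > 0`, the infimum of `a g₁ + b g₂ + log(1/g₁ + 1/g₂)` over `(0,∞)²` equals
`1 + log((√a + √b)²)`, and it is attained at
`g₁ = 1/(√a(√a+√b))`, `g₂ = 1/(√b(√a+√b))`. -/
theorem inf_rotated_entropy (a b : ℝ) (ha : 0 < a) (hb : 0 < b) :
    sInf ((fun g : ℝ × ℝ => a * g.1 + b * g.2 + Real.log (1/g.1 + 1/g.2)) ''
        (Set.Ioi (0:ℝ) ×ˢ Set.Ioi (0:ℝ))) =
      1 + Real.log ((Real.sqrt a + Real.sqrt b) ^ 2) ∧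
    (1/(Real.sqrt a * (Real.sqrt a + Real.sqrt b)),
        1/(Real.sqrt b * (Real.sqrt a + Real.sqrt b))) ∈ Set.Ioi (0:ℝ) ×ˢ Set.Ioi (0:ℝ) ∧
    a * (1/(Real.sqrt a * (Real.sqrt a + Real.sqrt b))) +
        b * (1/(Real.sqrt b * (Real.sqrt a + Real.sqrt b))) +
        Real.log (1/(1/(Real.sqrt a * (Real.sqrt a + Real.sqrt b))) +
          1/(1/(Real.sqrt b * (Real.sqrt a + Real.sqrt b)))) =
      1 + Real.log ((Real.sqrt a + Real.sqrt b) ^ 2) := by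
  set sa := Real.sqrt a with hsa_def
  set sb := Real.sqrt b with hsb_def
  have hsa : 0 < sa := Real.sqrt_pos.mpr ha
  have hsb : 0 < sb := Real.sqrt_pos.mpr hb
  have ha' : sa ^ 2 = a := Real.sq_sqrt ha.le
  have hb' : sb ^ 2 = b := Real.sq_sqrt hb.le
  have hs : (0:ℝ) < sa + sb := by positivity
  have hmem : (1/(sa * (sa + sb)), 1/(sb * (sa + sb))) ∈
      Set.Ioi (0:ℝ) ×ˢ Set.Ioi (0:ℝ) := by
    constructor <;> simp [Set.mem_Ioi] <;> positivity
  have hval : a * (1/(sa * (sa + sb))) + b * (1/(sb * (sa + sb))) +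
      Real.log (1/(1/(sa * (sa + sb))) + 1/(1/(sb * (sa + sb)))) =
      1 + Real.log ((sa + sb) ^ 2) := by
    rw [one_div_one_div, one_div_one_div]
    have h1 : sa * (sa + sb) + sb * (sa + sb) = (sa + sb) ^ 2 := by ring
    rw [h1]
    have h2 : a * (1/(sa * (sa + sb))) + b * (1/(sb * (sa + sb))) = 1 := by
      rw [← ha', ← hb']
      field_simp
    rw [h2]
  refine ⟨?_, hmem, hval⟩
  apply IsLeast.csInf_eq
  constructor
  · exact ⟨_, hmem, hval⟩
  · rintro x ⟨⟨g1, g2⟩, ⟨h1, h2⟩, rfl⟩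
    simp only [Set.mem_Ioi] at h1 h2
    simp only
    set T : ℝ := 1/g1 + 1/g2 with hT
    have hTpos : 0 < T := by positivity
    have hlog : Real.log ((sa + sb) ^ 2 / T) ≤ (sa + sb) ^ 2 / T - 1 :=
      Real.log_le_sub_one_of_pos (by positivity)
    rw [Real.log_div (by positivity) (ne_of_gt hTpos)] at hlog
    have hkey : (sa + sb) ^ 2 / T ≤ a * g1 + b * g2 := by
      rw [div_le_iff₀ hTpos, hT]
      have hsq : 0 ≤ (sa * g1 - sb * g2) ^ 2 := sq_nonneg _
      have e1 : (1:ℝ)/g1 = g1⁻¹ := one_div g1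
      have e2 : (1:ℝ)/g2 = g2⁻¹ := one_div g2
      rw [e1, e2]
      have hg1 : g1 * g1⁻¹ = 1 := mul_inv_cancel₀ h1.ne'
      have hg2 : g2 * g2⁻¹ = 1 := mul_inv_cancel₀ h2.ne'
      rw [← ha', ← hb']
      have expand : (sa ^ 2 * g1 + sb ^ 2 * g2) * (g1⁻¹ + g2⁻¹) =
          sa ^ 2 + sb ^ 2 + sa ^ 2 * g1 * g2⁻¹ + sb ^ 2 * g2 * g1⁻¹ := by
        field_simp
        ring
      rw [expand]
      have hab : 2 * sa * sb ≤ sa ^ 2 * g1 * g2⁻¹ + sb ^ 2 * g2 * g1⁻¹ := by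
        have h : sa ^ 2 * g1 * g2⁻¹ + sb ^ 2 * g2 * g1⁻¹ - 2 * sa * sb =
            (sa * g1 - sb * g2) ^ 2 * (g1⁻¹ * g2⁻¹) := by
          field_simp
          ring
        have hnn : 0 ≤ (sa * g1 - sb * g2) ^ 2 * (g1⁻¹ * g2⁻¹) := by positivity
        linarith [h ▸ hnn]
      nlinarith [hab]
    nlinarith [hlog, hkey]
end

section
/- For (m,ρ) in A and n ≥ 3, Z_n(mn, ρn) ≥ (1/2)·n·(((ρ+m)n/2)^(n-2))/((n-2)!), and consequently liminf_{n→∞} (1/n) log Z_n(mn, ρn) ≥ 1 + log((ρ+m)/2). -/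
/-!
Keeping only the summand `k = n - 1` of `Z_n` gives the explicit bound. Bounding `(n-2)!` from
above by the monotonicity of the Stirling sequence turns it into `Z_n ≥ ½ c^(n-2) e^(n-3)` with
`c = (ρ+m)/2`, and `(1/n) log` of the right-hand side tends to `1 + log c`. Since the `liminf` of
a real sequence that is not bounded above is a junk value, the crude bound `Z_n ≤ 2^n e^(ρn)` is
needed as well.
-/

open scoped Nat
open Filter

open Real Finset Topology

theorem half_mul_pow_div_factorial_le_Zorth {n : ℕ} (hn : 2 ≤ n) {M N : ℝ} (h : |M| ≤ N) :
    (1/2) * n * ((N + M) / 2) ^ (n - 2) / ((n - 2)! : ℝ) ≤ Zorth n M N := by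
  obtain ⟨hM₁, hM₂⟩ := abs_le.mp h
  have hx : 0 ≤ (N + M) / 2 := by linarith
  have hy : 0 ≤ (N - M) / 2 := by linarith
  have hlast := single_le_sum
    (f := fun k => (n.choose k : ℝ) * (((N + M)/2) ^ (k - 1) / ((k - 1)! : ℝ)) *
      (((N - M)/2) ^ (n - k - 1) / ((n - k - 1)! : ℝ)))
    (fun k _ => by positivity) (show n - 1 ∈ Ico 1 n by simp only [mem_Ico]; omega)
  have hchoose : n.choose (n - 1) = n := by
    rw [Nat.choose_symm (by omega), Nat.choose_one_right]
  rw [show n - 1 - 1 = n - 2 by omega, show n - (n - 1) - 1 = 0 by omega] at hlast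
  simp only [hchoose, pow_zero, Nat.factorial_zero, Nat.cast_one, div_one, mul_one] at hlast
  calc _ = (1/2) * (n * (((N + M) / 2) ^ (n - 2) / ((n - 2)! : ℝ))) := by ring
    _ ≤ Zorth n M N := by rw [Zorth]; gcongr

theorem Zorth_le_two_pow_mul_exp (n : ℕ) {M N : ℝ} (h : |M| ≤ N) :
    Zorth n M N ≤ 2 ^ n * exp N := by
  obtain ⟨hM₁, hM₂⟩ := abs_le.mp h
  have hx : 0 ≤ (N + M) / 2 := by linarith
  have hy : 0 ≤ (N - M) / 2 := by linarith
  have hterm : ∀ k ∈ Ico 1 n,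
      (n.choose k : ℝ) * (((N + M)/2) ^ (k - 1) / ((k - 1)! : ℝ)) *
        (((N - M)/2) ^ (n - k - 1) / ((n - k - 1)! : ℝ)) ≤ n.choose k * exp N := by
    intro k _
    calc _ ≤ n.choose k * exp ((N + M) / 2) * exp ((N - M) / 2) := by
          gcongr
          · exact pow_div_factorial_le_exp _ hx _
          · exact pow_div_factorial_le_exp _ hy _
      _ = n.choose k * exp N := by rw [mul_assoc, ← exp_add]; ring_nf
  have hchoose : ∑ k ∈ Ico 1 n, (n.choose k : ℝ) ≤ 2 ^ n := by
    calc ∑ k ∈ Ico 1 n, (n.choose k : ℝ) ≤ ∑ k ∈ range (n + 1), (n.choose k : ℝ) :=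
          sum_le_sum_of_subset_of_nonneg
            (fun k hk => by simp only [mem_Ico, mem_range] at hk ⊢; omega)
            (fun _ _ _ => by positivity)
      _ = 2 ^ n := by exact_mod_cast Nat.sum_range_choose n
  calc Zorth n M N ≤ (1/2) * ∑ k ∈ Ico 1 n, (n.choose k : ℝ) * exp N := by
        rw [Zorth]; exact mul_le_mul_of_nonneg_left (sum_le_sum hterm) (by norm_num)
    _ ≤ 2 ^ n * exp N := by
        rw [← sum_mul]
        have hS : 0 ≤ ∑ k ∈ Ico 1 n, (n.choose k : ℝ) := sum_nonneg fun _ _ => Nat.cast_nonneg _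
        nlinarith [exp_pos N]

theorem factorial_le_exp_one_mul_sqrt_mul_pow {k : ℕ} (hk : k ≠ 0) :
    (k ! : ℝ) ≤ exp 1 * √k * (k / exp 1) ^ k := by
  obtain ⟨j, rfl⟩ := Nat.exists_eq_succ_of_ne_zero hk
  have hle : Stirling.stirlingSeq (j + 1) ≤ Stirling.stirlingSeq 1 :=
    Stirling.stirlingSeq'_antitone (Nat.zero_le j)
  rw [Stirling.stirlingSeq_one, Stirling.stirlingSeq, div_le_iff₀ (by positivity)] at hle
  calc _ ≤ exp 1 / √2 * (√(2 * (j + 1 : ℕ)) * ((j + 1 : ℕ) / exp 1) ^ (j + 1)) := hle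
    _ = _ := by
      rw [sqrt_mul (by norm_num)]
      field_simp

theorem pow_mul_exp_le_mul_pow_div_factorial {c x : ℝ} (hc : 0 ≤ c) {k : ℕ} (hk : k ≠ 0)
    (hkx : (k : ℝ) ≤ x) : c ^ k * exp (k - 1) ≤ x * (c * x) ^ k / k ! := by
  have hk1 : (1 : ℝ) ≤ k := by exact_mod_cast Nat.one_le_iff_ne_zero.mpr hk
  have hsqrt : √k ≤ x := (sqrt_le_left (by linarith)).mpr (by nlinarith)
  have hexp : exp (k - 1) * exp 1 = exp 1 ^ k := by rw [← exp_add, ← exp_nat_mul]; ring_nf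
  rw [le_div_iff₀ (by positivity)]
  calc c ^ k * exp (k - 1) * k ! ≤ c ^ k * exp (k - 1) * (exp 1 * √k * (k / exp 1) ^ k) := by
        gcongr; exact factorial_le_exp_one_mul_sqrt_mul_pow hk
    _ = c ^ k * √k * k ^ k := by
        rw [div_pow, ← hexp]; field_simp
    _ ≤ c ^ k * x * x ^ k := by gcongr; exact mul_nonneg (pow_nonneg hc k) (by linarith)
    _ = x * (c * x) ^ k := by ring

variable {m ρ : ℝ} {n : ℕ}

theorem abs_mul_natCast_le (h : |m| ≤ ρ) (n : ℕ) : |m * n| ≤ ρ * n := by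
  rw [abs_mul, Nat.abs_cast]
  exact mul_le_mul_of_nonneg_right h n.cast_nonneg

theorem half_mul_pow_div_factorial_le_Zorth_mul (h : |m| ≤ ρ) (hn : 2 ≤ n) :
    (1/2) * n * ((ρ + m) * n / 2) ^ (n - 2) / ((n - 2)! : ℝ) ≤ Zorth n (m * n) (ρ * n) := by
  convert half_mul_pow_div_factorial_le_Zorth hn (abs_mul_natCast_le h n) using 4
  ring

theorem half_mul_pow_mul_exp_le_Zorth_mul (h : |m| ≤ ρ) (hn : 3 ≤ n) :
    (1/2) * ((ρ + m) / 2) ^ (n - 2) * exp (n - 3) ≤ Zorth n (m * n) (ρ * n) := by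
  have hc : 0 ≤ (ρ + m) / 2 := by linarith [neg_abs_le m]
  have hcast : ((n - 2 : ℕ) : ℝ) = n - 2 := by rw [Nat.cast_sub (by omega)]; norm_num
  have hkey := pow_mul_exp_le_mul_pow_div_factorial hc (k := n - 2) (x := n) (by omega)
    (by rw [hcast]; linarith)
  rw [hcast, show (n : ℝ) - 2 - 1 = n - 3 by ring] at hkey
  calc _ ≤ (1/2) * (n * ((ρ + m) / 2 * n) ^ (n - 2) / ((n - 2)! : ℝ)) := by rw [mul_assoc]; gcongr
    _ = (1/2) * n * ((ρ + m) * n / 2) ^ (n - 2) / ((n - 2)! : ℝ) := by ring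
    _ ≤ _ := half_mul_pow_div_factorial_le_Zorth_mul h (by omega)

theorem log_Zorth_mul_div_ge (h : |m| < ρ) (hn : 3 ≤ n) :
    1 + log ((ρ + m) / 2) + (log (1/2) - 2 * log ((ρ + m) / 2) - 3) / n ≤
      (1 / n) * log (Zorth n (m * n) (ρ * n)) := by
  have hc : 0 < (ρ + m) / 2 := by linarith [neg_abs_le m]
  have hn0 : (0 : ℝ) < n := by positivity
  have hlog := log_le_log (by positivity) (half_mul_pow_mul_exp_le_Zorth_mul h.le hn)
  rw [log_mul (by positivity) (by positivity), log_mul (by norm_num) (by positivity), log_pow,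
    log_exp, Nat.cast_sub (by omega), Nat.cast_ofNat] at hlog
  rw [one_div_mul_eq_div, le_div_iff₀ hn0]
  calc _ = log (1/2) + ((n : ℝ) - 2) * log ((ρ + m) / 2) + (n - 3) := by
        field_simp; ring
    _ ≤ _ := hlog

theorem log_Zorth_mul_div_le (h : |m| < ρ) (hn : 3 ≤ n) :
    (1 / n) * log (Zorth n (m * n) (ρ * n)) ≤ log 2 + ρ := by
  have hc : 0 < (ρ + m) / 2 := by linarith [neg_abs_le m]
  have hn0 : (0 : ℝ) < n := by positivity
  have hZ : 0 < Zorth n (m * n) (ρ * n) :=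
    lt_of_lt_of_le (by positivity) (half_mul_pow_mul_exp_le_Zorth_mul h.le hn)
  have hlog := log_le_log hZ (Zorth_le_two_pow_mul_exp n (abs_mul_natCast_le h.le n))
  rw [log_mul (by positivity) (by positivity), log_pow, log_exp] at hlog
  rw [one_div_mul_eq_div, div_le_iff₀ hn0]
  linarith

theorem le_liminf_of_tendsto_of_eventually_le {α : Type*} {l : Filter α} [l.NeBot]
    {f u : α → ℝ} {L B : ℝ} (hf : Tendsto f l (𝓝 L)) (hfu : f ≤ᶠ[l] u)
    (hu : ∀ᶠ a in l, u a ≤ B) : L ≤ liminf u l := by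
  rw [← hf.liminf_eq]
  exact liminf_le_liminf hfu hf.isBoundedUnder_ge
    (isBoundedUnder_of_eventually_le hu).isCoboundedUnder_ge

theorem Zorth_lower_bound_general (m ρ : ℝ) (hm : |m| < ρ) :
    (∀ n : ℕ, 3 ≤ n →
        Zorth n (m * n) (ρ * n) ≥ (1/2) * n * ((ρ + m) * n / 2) ^ (n - 2) / ((n - 2)! : ℝ)) ∧
    liminf (fun n : ℕ => (1/(n:ℝ)) * Real.log (Zorth n (m * n) (ρ * n))) atTop ≥
      1 + Real.log ((ρ + m)/2) := by
  refine ⟨fun n hn => half_mul_pow_div_factorial_le_Zorth_mul hm.le (by omega), ?_⟩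
  have hlim : Tendsto (fun n : ℕ => 1 + log ((ρ + m) / 2) +
      (log (1/2) - 2 * log ((ρ + m) / 2) - 3) / n) atTop (𝓝 (1 + log ((ρ + m) / 2))) := by
    simpa using (tendsto_const_div_atTop_nhds_zero_nat _).const_add (1 + log ((ρ + m) / 2))
  exact le_liminf_of_tendsto_of_eventually_le hlim
    (eventually_atTop.2 ⟨3, fun n hn => log_Zorth_mul_div_ge hm hn⟩)
    (eventually_atTop.2 ⟨3, fun n hn => log_Zorth_mul_div_le hm hn⟩)

/-- Lower bound for the microcanonical partition function and the resulting liminf bound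
on the microcanonical entropy. -/
theorem Zorth_lower_bound (m ρ : ℝ) (hρ : 0 < ρ) (hm : |m| < ρ) :
    (∀ n : ℕ, 3 ≤ n →
        Zorth n (m * n) (ρ * n) ≥ (1/2) * n * ((ρ + m) * n / 2) ^ (n - 2) / ((n - 2)! : ℝ)) ∧
    liminf (fun n : ℕ => (1/(n:ℝ)) * Real.log (Zorth n (m * n) (ρ * n))) atTop ≥
      1 + Real.log ((ρ + m)/2) :=
  Zorth_lower_bound_general m ρ hm
end

section
/- Every weak limit point of a sequence {P_n} of probability measures on a Polish space X satisfying a large deviations principle with rate function I has support contained in I⁻¹{0}. -/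
open MeasureTheory Filter Topology
open scoped ENNReal

/-!
If `I x > 0`, lower semicontinuity gives a closed neighbourhood `C` of `x` on which `I` is bounded
below by some `c > 0`. The LDP upper bound then makes `P n C` decay exponentially, so along the
subsequence the measures of `C` tend to `0`, and by the portmanteau theorem the limit `Q` gives
measure `0` to the interior of `C`; hence `x` is not in the support of `Q`.
-/

theorem ENNReal.tendsto_zero_of_limsup_log_div_lt_zero {a : ℕ → ℝ≥0∞}
    (h : limsup (fun n : ℕ => ((1 / (n : ℝ) : ℝ) : EReal) * ENNReal.log (a n)) atTop < 0) :
    Tendsto a atTop (𝓝 0) := by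
  obtain ⟨r, hr_lt, hr_neg⟩ := EReal.exists_between_coe_real h
  have hr : r < 0 := by exact_mod_cast hr_neg
  have hlog : ∀ᶠ n : ℕ in atTop, ENNReal.log (a n) < ((r * n : ℝ) : EReal) := by
    filter_upwards [eventually_lt_of_limsup_lt hr_lt, eventually_gt_atTop 0] with n hn hn0
    have hn0' : (0 : EReal) < ((n : ℝ) : EReal) := by exact_mod_cast hn0
    rw [EReal.coe_mul, ← EReal.div_lt_iff hn0' (EReal.coe_ne_top _), EReal.div_eq_inv_mul]
    simpa [EReal.coe_inv] using hn
  have hlog_bot : Tendsto (fun n : ℕ => ENNReal.log (a n)) atTop (𝓝 ⊥) :=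
    tendsto_nhds_bot_mono
      (EReal.tendsto_coe_nhds_bot_iff.2 (tendsto_natCast_atTop_atTop.const_mul_atTop_of_neg hr))
      (hlog.mono fun _ hn => hn.le)
  simpa [Function.comp_def, ENNReal.exp_log] using
    EReal.tendsto_exp_nhds_bot_nhds_zero.comp hlog_bot

theorem ProbabilityMeasure.measure_interior_eq_zero_of_tendsto {Ω ι : Type*} {L : Filter ι}
    [L.NeBot] [MeasurableSpace Ω] [TopologicalSpace Ω] [OpensMeasurableSpace Ω]
    [HasOuterApproxClosed Ω] {μ : ProbabilityMeasure Ω} {μs : ι → ProbabilityMeasure Ω}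
    (μs_lim : Tendsto μs L (𝓝 μ)) {C : Set Ω}
    (hC : Tendsto (fun i => (μs i : Measure Ω) C) L (𝓝 0)) :
    (μ : Measure Ω) (interior C) = 0 :=
  nonpos_iff_eq_zero.1 <|
    calc (μ : Measure Ω) (interior C)
        ≤ L.liminf fun i => (μs i : Measure Ω) (interior C) :=
          ProbabilityMeasure.le_liminf_measure_open_of_tendsto μs_lim isOpen_interior
      _ ≤ L.liminf fun i => (μs i : Measure Ω) C :=
          liminf_le_liminf (Eventually.of_forall fun _ => measure_mono interior_subset)
      _ = 0 := hC.liminf_eq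

theorem ldp_limit_point_support_general {X : Type*} [MetricSpace X]
    [MeasurableSpace X] [BorelSpace X]
    (I : X → ℝ≥0∞) (hlsc : LowerSemicontinuous I)
    (P : ℕ → ProbabilityMeasure X)
    (hupper : ∀ C : Set X, IsClosed C →
      limsup (fun n : ℕ => ((1/(n:ℝ) : ℝ) : EReal) * ENNReal.log ((P n : Measure X) C))
          atTop ≤ -(⨅ x ∈ C, (I x : EReal)))
    (Q : ProbabilityMeasure X) (φ : ℕ → ℕ) (hφ : StrictMono φ)
    (hlim : Tendsto (fun k => P (φ k)) atTop (𝓝 Q)) :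
    {x : X | ∀ U ∈ 𝓝 x, 0 < (Q : Measure X) U} ⊆ {x | I x = 0} := by
  intro x hx
  by_contra hIx
  obtain ⟨c, hc_pos, hc_lt⟩ := exists_between (pos_iff_ne_zero.2 hIx)
  obtain ⟨C, hC_nhds, hC_closed, hC_gt⟩ := exists_mem_nhds_isClosed_subset (hlsc x c hc_lt)
  have hinf_pos : 0 < ⨅ y ∈ C, (I y : EReal) :=
    (EReal.coe_ennreal_pos.2 hc_pos).trans_le
      (le_iInf₂ fun y hy => EReal.coe_ennreal_le_coe_ennreal_iff.2 (hC_gt hy).le)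
  have hPC : Tendsto (fun n => (P n : Measure X) C) atTop (𝓝 0) :=
    ENNReal.tendsto_zero_of_limsup_log_div_lt_zero
      ((hupper C hC_closed).trans_lt (EReal.neg_lt_zero.2 hinf_pos))
  have hQ : (Q : Measure X) (interior C) = 0 :=
    ProbabilityMeasure.measure_interior_eq_zero_of_tendsto hlim (hPC.comp hφ.tendsto_atTop)
  exact (hx _ (interior_mem_nhds.2 hC_nhds)).ne' hQ

/-- Every weak limit point of a sequence of probability measures satisfying a large
deviations principle with rate function `I` has (topological) support contained in
`I⁻¹{0}`. -/
theorem ldp_limit_point_support {X : Type*} [MetricSpace X] [CompleteSpace X]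
    [SecondCountableTopology X] [MeasurableSpace X] [BorelSpace X]
    (I : X → ℝ≥0∞) (hlsc : LowerSemicontinuous I)
    (hlevel : ∀ c : ℝ≥0∞, c ≠ ⊤ → IsCompact {x | I x ≤ c})
    (P : ℕ → ProbabilityMeasure X)
    (hupper : ∀ C : Set X, IsClosed C →
      limsup (fun n : ℕ => ((1/(n:ℝ) : ℝ) : EReal) * ENNReal.log ((P n : Measure X) C))
          atTop ≤ -(⨅ x ∈ C, (I x : EReal)))
    (hlower : ∀ O : Set X, IsOpen O →
      -(⨅ x ∈ O, (I x : EReal)) ≤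
        liminf (fun n : ℕ => ((1/(n:ℝ) : ℝ) : EReal) * ENNReal.log ((P n : Measure X) O))
          atTop)
    (Q : ProbabilityMeasure X) (φ : ℕ → ℕ) (hφ : StrictMono φ)
    (hlim : Tendsto (fun k => P (φ k)) atTop (𝓝 Q)) :
    {x : X | ∀ U ∈ 𝓝 x, 0 < (Q : Measure X) U} ⊆ {x | I x = 0} :=
  ldp_limit_point_support_general I hlsc P hupper Q φ hφ hlim
end
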